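/- arXiv:1602.03292 — 4 statements merged into one kernel-verified Lean document; each statement's English description precedes it below -/
import Mathlib

section
/- For every integer n ≥ 1, the alternating sum ∑_{m=0}^{n} (−1)^m A_{nm} equals 1/A_{n0}, i.e. ∑_{m=0}^{n} (−1)^m A_{nm} = −4^n / C(2n, n). -/
/-- `A n m` is the coefficient
`A_{nm} := 2^{−2n}/(2m−1) · C(2(n+m), n+m) · C(n+m, 2m)`. -/
noncomputable def A (n m : ℕ) : ℝ :=
  (2 : ℝ) ^ (-(2 * n : ℤ)) / (2 * (m : ℝ) - 1) * (Nat.choose (2 * (n + m)) (n + m)) *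
    (Nat.choose (n + m) (2 * m))

noncomputable def G (n m : ℕ) : ℝ :=
  if m = 0 then 0 else
    (2:ℝ) ^ (-(2 * (n+1) : ℤ)) * (-1)^(m+1) * (4*(n:ℝ)+3) * (2*(m:ℝ)-1) /
      ((2*(n:ℝ)+1)^2 * ((n:ℝ)+1)) * (Nat.choose (2*(n+m)) (n+m)) * (Nat.choose (n+m) (2*m-1))

lemma hpow (n : ℕ) : (2:ℝ)^(-(2*n:ℤ)) = 4 * (2:ℝ)^(-(2*(n+1):ℤ)) := by
  rw [show (-(2*((n:ℤ)+1))) = -(2*n:ℤ) + (-2) by ring, zpow_add₀ (two_ne_zero)]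
  norm_num
  ring

lemma cb (p : ℕ) : ((p:ℝ)+1) * (Nat.choose (2*(p+1)) (p+1)) = 2*(2*(p:ℝ)+1) * (Nat.choose (2*p) p) := by
  have := Nat.succ_mul_centralBinom_succ p
  simp only [Nat.centralBinom] at this
  exact_mod_cast congrArg (Nat.cast : ℕ → ℝ) this

lemma key (n m : ℕ) (hm : m ≤ n + 1) :
    (-1:ℝ)^m * A (n+1) m - (2*((n:ℝ)+1)/(2*(n:ℝ)+1)) * ((-1:ℝ)^m * A n m)
      = G n (m+1) - G n m := by
  have hn1 : (2*(n:ℝ)+1) ≠ 0 := by positivity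
  have hn2 : ((n:ℝ)+1) ≠ 0 := by positivity
  rcases Nat.eq_zero_or_pos m with rfl | hm1
  · -- m = 0
    simp only [A, G, if_pos rfl, if_neg one_ne_zero, Nat.add_zero, Nat.choose_zero_right,
      Nat.choose_one_right, Nat.mul_zero, Nat.zero_add, Nat.mul_one, show 2 - 1 = 1 from rfl]
    have e1 := cb n
    have hc1 : ((Nat.choose (2*(n+1)) (n+1) : ℕ) : ℝ)
        = 2*(2*(n:ℝ)+1) * (Nat.choose (2*n) n) / ((n:ℝ)+1) := by
      rw [eq_div_iff hn2]; linear_combination e1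
    rw [hpow n, hc1]
    push_cast
    field_simp
    ring
  · rcases Nat.lt_or_ge m (n+1) with hlt | hge
    · -- 1 ≤ m ≤ n
      have hmn : m ≤ n := by omega
      obtain ⟨j, rfl⟩ : ∃ j, m = j+1 := ⟨m-1, by omega⟩
      obtain ⟨k, rfl⟩ : ∃ k, n = j+1+k := ⟨n-(j+1), by omega⟩
      simp only [A, G, if_neg (Nat.succ_ne_zero _),
        show (j+1+k+1)+(j+1) = 2*j+k+2+1 from by omega,
        show (j+1+k)+(j+1) = 2*j+k+2 from by omega,
        show (j+1+k)+(j+1+1) = 2*j+k+2+1 from by omega,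
        show 2*(j+1) = 2*j+1+1 from by omega,
        show 2*(j+1+1)-1 = 2*j+1+1+1 from by omega,
        show 2*(j+1)-1 = 2*j+1 from by omega,
        show 2*j+1+1-1 = 2*j+1 from by omega]
      rw [hpow (j+1+k)]
      have h3 : (2*(j:ℝ)+(k:ℝ)+3) ≠ 0 := by positivity
      have h4 : (2*(j:ℝ)+2) ≠ 0 := by positivity
      have h5 : (2*(j:ℝ)+3) ≠ 0 := by positivity
      have E1 := cb (2*j+k+2)
      have E2 := Nat.choose_succ_succ (2*j+k+2) (2*j+1)
      have E3 := Nat.choose_succ_right_eq (2*j+k+2) (2*j+1)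
      rw [show 2*j+k+2-(2*j+1) = k+1 from by omega] at E3
      have E4 := Nat.add_one_mul_choose_eq (2*j+k+2) (2*j+1+1)
      replace E3 := congrArg (Nat.cast : ℕ → ℝ) E3
      replace E4 := congrArg (Nat.cast : ℕ → ℝ) E4
      push_cast at E1 E3 E4
      rw [show 2*j+2+1 = 2*j+1+1+1 from by omega] at E4
      have hX1 : ((Nat.choose (2*(2*j+k+2+1)) (2*j+k+2+1) : ℕ) : ℝ)
          = 2*(2*(2*(j:ℝ)+(k:ℝ)+2)+1) * (Nat.choose (2*(2*j+k+2)) (2*j+k+2)) / (2*(j:ℝ)+(k:ℝ)+3) := by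
        rw [eq_div_iff h3]; linear_combination E1
      have hX2 : ((Nat.choose (2*j+k+2+1) (2*j+1+1) : ℕ) : ℝ)
          = ((Nat.choose (2*j+k+2) (2*j+1) : ℕ) : ℝ) + ((Nat.choose (2*j+k+2) (2*j+1+1) : ℕ) : ℝ) := by
        exact_mod_cast congrArg (Nat.cast : ℕ → ℝ) E2
      have hX3 : ((Nat.choose (2*j+k+2+1) (2*j+1+1+1) : ℕ) : ℝ)
          = (2*(j:ℝ)+(k:ℝ)+3) * (Nat.choose (2*j+k+2) (2*j+1+1)) / (2*(j:ℝ)+3) := by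
        rw [eq_div_iff h5]; linear_combination -E4
      have hY2 : ((Nat.choose (2*j+k+2) (2*j+1+1) : ℕ) : ℝ)
          = (Nat.choose (2*j+k+2) (2*j+1)) * ((k:ℝ)+1) / (2*(j:ℝ)+2) := by
        rw [eq_div_iff h4]; linear_combination E3
      rw [hX1, hX2, hX3, hY2]
      push_cast
      push_cast at hn1 hn2
      rw [show 2*((j:ℝ)+1)-1 = 2*(j:ℝ)+1 from by ring]
      have h6 : (2*(j:ℝ)+1) ≠ 0 := by positivity
      generalize (2:ℝ) ^ (-(2 * ((j:ℤ) + 1 + (k:ℤ) + 1))) = P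
      simp only [pow_succ]
      field_simp
      ring
    · -- m = n+1
      have hm2 : m = n+1 := by omega
      subst hm2
      have hz1 : Nat.choose (n+(n+1)) (2*(n+1)) = 0 := Nat.choose_eq_zero_of_lt (by omega)
      have hz2 : Nat.choose (n+(n+1+1)) (2*(n+1+1)-1) = 0 := Nat.choose_eq_zero_of_lt (by omega)
      simp only [A, G, if_neg (Nat.succ_ne_zero _), hz1, hz2,
        show (n+1)+(n+1) = 2*n+1+1 from by omega, show n+(n+1) = 2*n+1 from by omega,
        show 2*(n+1) = 2*n+1+1 from by omega, show 2*n+1+1-1 = 2*n+1 from by omega,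
        Nat.choose_self, Nat.choose_succ_self, Nat.cast_one, mul_one, Nat.cast_zero,
        mul_zero, zero_sub]
      have e1 := cb (2*n+1)
      push_cast at e1
      have hY : (0:ℝ) < 2*(n:ℝ)+1+1 := by positivity
      have hc1 : ((Nat.choose (2*(2*n+1+1)) (2*n+1+1) : ℕ) : ℝ)
          = 2*(2*(2*(n:ℝ)+1)+1) * (Nat.choose (2*(2*n+1)) (2*n+1)) / (2*(n:ℝ)+1+1) := by
        rw [eq_div_iff hY.ne']; linear_combination e1
      push_cast
      simp only [pow_succ]
      generalize (2:ℝ) ^ (-(2 * ((n:ℤ) + 1))) = P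
      rw [show 2*((n:ℝ)+1)-1 = 2*(n:ℝ)+1 from by ring]
      field_simp
      rw [hc1]; field_simp; ring

lemma step (n : ℕ) :
    ∑ m ∈ Finset.range (n+2), (-1:ℝ)^m * A (n+1) m
      = (2*((n:ℝ)+1)/(2*(n:ℝ)+1)) * ∑ m ∈ Finset.range (n+1), (-1:ℝ)^m * A n m := by
  have h1 : ∑ m ∈ Finset.range (n+2), ((-1:ℝ)^m * A (n+1) m
      - (2*((n:ℝ)+1)/(2*(n:ℝ)+1)) * ((-1:ℝ)^m * A n m))
      = G n (n+2) - G n 0 := by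
    rw [← Finset.sum_range_sub (G n)]
    exact Finset.sum_congr rfl fun m hm => key n m (by simp at hm; omega)
  have hG0 : G n 0 = 0 := if_pos rfl
  have hGe : G n (n+2) = 0 := by
    have : Nat.choose (n+(n+2)) (2*(n+2)-1) = 0 := Nat.choose_eq_zero_of_lt (by omega)
    simp [G, this]
  have hA : A n (n+1) = 0 := by
    have : Nat.choose (n+(n+1)) (2*(n+1)) = 0 := Nat.choose_eq_zero_of_lt (by omega)
    simp [A, this]
  have h4 : ∑ m ∈ Finset.range (n+2), (-1:ℝ)^m * A n m
      = ∑ m ∈ Finset.range (n+1), (-1:ℝ)^m * A n m := by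
    rw [Finset.sum_range_succ, hA, mul_zero, add_zero]
  rw [Finset.sum_sub_distrib, ← Finset.mul_sum, hG0, hGe, h4] at h1
  linarith [h1]

/-- For every `n ≥ 1`, `∑_{m=0}^{n} (−1)^m A_{nm} = 1/A_{n0} = −4^n / C(2n, n)`. -/
theorem A_alternating_sum (n : ℕ) (hn : 1 ≤ n) :
    ∑ m ∈ Finset.range (n + 1), (-1 : ℝ) ^ m * A n m
      = -(4 : ℝ) ^ n / (Nat.choose (2 * n) n) := by
  induction n, hn using Nat.le_induction with
  | base =>
    norm_num [A, Finset.sum_range_succ, Finset.sum_range_one,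
      show Nat.choose 4 2 = 6 from rfl, show Nat.choose 2 1 = 2 from rfl]
  | succ n hn ih =>
    rw [show n+1+1 = n+2 by rfl, step n, ih]
    have e1 := cb n
    have h2 : (Nat.choose (2*n) n : ℝ) ≠ 0 := by
      exact Nat.cast_ne_zero.mpr (Nat.choose_pos (by omega)).ne'
    have h3 : (Nat.choose (2*(n+1)) (n+1) : ℝ) ≠ 0 := by
      exact Nat.cast_ne_zero.mpr (Nat.choose_pos (by omega)).ne'
    have hn1 : (2*(n:ℝ)+1) ≠ 0 := by positivity
    have hn2 : ((n:ℝ)+1) ≠ 0 := by positivity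
    push_cast at e1 ⊢
    field_simp
    linear_combination (-2*(4:ℝ)^n) * e1
end

section
/- For every integer n ≥ 1, 2 ∑_{m=1}^{n} (−1)^m A_{nm} · m = (−1)^n + 1/A_{n0}, i.e. 2 ∑_{m=1}^{n} (−1)^m A_{nm} · m = (−1)^n − 4^n / C(2n, n). -/
noncomputable def g (n m : ℕ) : ℝ :=
  -((-1:ℝ)^m * m * ((m:ℝ)-1) * (2*(m:ℝ)-1) * ((4*(n:ℝ)+3)*(4*(n:ℝ)+5)*(4*(n:ℝ)+7)) *
    ((2*(n+m)).factorial) /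
    ((4:ℝ)^n * (4*((n:ℝ)+1)*(2*(n:ℝ)+3)) * ((n+m).factorial) * ((2*m).factorial) *
      ((n+2-m).factorial)))

lemma fact1 (a : ℕ) : (((a+1).factorial : ℕ) : ℝ) = ((a:ℝ)+1) * a.factorial := by
  push_cast [Nat.factorial_succ]; ring

lemma fact2 (a : ℕ) : (((a+2).factorial : ℕ) : ℝ) = ((a:ℝ)+2) * ((a:ℝ)+1) * a.factorial := by
  rw [show a+2 = (a+1)+1 from rfl, fact1, fact1]; push_cast; ring

lemma fact4 (a : ℕ) : (((a+4).factorial : ℕ) : ℝ)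
    = ((a:ℝ)+4) * ((a:ℝ)+3) * ((a:ℝ)+2) * ((a:ℝ)+1) * a.factorial := by
  rw [show a+4 = (a+2)+2 from rfl, fact2, fact2]; push_cast; ring

lemma p_eq (n : ℕ) : (2:ℝ) ^ (-(2 * n : ℤ)) = ((4:ℝ)^n)⁻¹ := by
  rw [show (-(2 * n : ℤ)) = -((2*n : ℕ) : ℤ) from by push_cast; ring, zpow_neg, zpow_natCast,
    pow_mul]
  norm_num

lemma fne (a : ℕ) : ((a.factorial : ℕ) : ℝ) ≠ 0 :=
  Nat.cast_ne_zero.mpr (Nat.factorial_ne_zero a)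

lemma mne (m : ℕ) (hm : 1 ≤ m) : 2 * (m : ℝ) - 1 ≠ 0 := by
  have : (1:ℝ) ≤ m := by exact_mod_cast hm
  nlinarith

lemma four_ne (n : ℕ) : ((4:ℝ)^n) ≠ 0 := by positivity

lemma A_eq (m k : ℕ) (hm : 1 ≤ m) :
    A (m + k) m = ((2 * (m + k + m)).factorial) /
      ((4:ℝ)^(m+k) * (2 * (m : ℝ) - 1) * (m + k + m).factorial * (2 * m).factorial *
        k.factorial) := by
  unfold A
  rw [Nat.cast_choose ℝ (by omega : m + k + m ≤ 2 * (m + k + m)),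
      Nat.cast_choose ℝ (by omega : 2 * m ≤ m + k + m),
      show 2 * (m + k + m) - (m + k + m) = m + k + m from by omega,
      show m + k + m - 2 * m = k from by omega, p_eq]
  have h1 := fne (m+k+m)
  have h2 := fne (2*m)
  have h3 := fne k
  rw [div_mul_div_comm, div_mul_div_comm,
    div_eq_div_iff
      (mul_ne_zero (mul_ne_zero (mne m hm) (mul_ne_zero h1 h1)) (mul_ne_zero h2 h3))
      (mul_ne_zero (mul_ne_zero (mul_ne_zero (mul_ne_zero (four_ne _) (mne m hm)) h1) h2) h3)]
  have h4 := four_ne (m+k)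
  field_simp

lemma A_eq1 (m k : ℕ) (hm : 1 ≤ m) :
    A (m + k + 1) m = ((2 * (m + k + m) + 2).factorial) /
      ((4:ℝ)^(m+k) * 4 * (2 * (m : ℝ) - 1) * ((m + k + m) + 1).factorial * (2 * m).factorial *
        (k + 1).factorial) := by
  rw [show m + k + 1 = m + (k + 1) from by omega, A_eq m (k+1) hm,
      show m + (k + 1) = (m + k) + 1 from by omega,
      show 2 * (m + k + 1 + m) = 2 * (m + k + m) + 2 from by omega,
      show m + k + 1 + m = (m + k + m) + 1 from by omega, pow_succ]

lemma A_eq2 (m k : ℕ) (hm : 1 ≤ m) :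
    A (m + k + 2) m = ((2 * (m + k + m) + 4).factorial) /
      ((4:ℝ)^(m+k) * 16 * (2 * (m : ℝ) - 1) * ((m + k + m) + 2).factorial * (2 * m).factorial *
        (k + 2).factorial) := by
  rw [show m + k + 2 = m + (k + 2) from by omega, A_eq m (k+2) hm,
      show m + (k + 2) = ((m + k) + 1) + 1 from by omega,
      show 2 * (m + k + 2 + m) = 2 * (m + k + m) + 4 from by omega,
      show m + k + 2 + m = (m + k + m) + 2 from by omega, pow_succ, pow_succ]
  ring

lemma g_eq0 (m k : ℕ) :
    g (m + k) m = -((-1:ℝ)^m * m * ((m:ℝ)-1) * (2*(m:ℝ)-1) *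
      ((4*((m:ℝ)+k)+3)*(4*((m:ℝ)+k)+5)*(4*((m:ℝ)+k)+7)) * ((2*(m+k+m)).factorial) /
      ((4:ℝ)^(m+k) * (4*((m:ℝ)+k+1)*(2*((m:ℝ)+k)+3)) * ((m+k+m).factorial) * ((2*m).factorial) *
        ((k+2).factorial))) := by
  unfold g
  rw [show m + k + 2 - m = k + 2 from by omega]
  push_cast
  ring

lemma g_eq1 (m k : ℕ) :
    g (m + k) (m + 1) = -((-1:ℝ)^m * (-1) * ((m:ℝ)+1) * (m:ℝ) * (2*(m:ℝ)+1) *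
      ((4*((m:ℝ)+k)+3)*(4*((m:ℝ)+k)+5)*(4*((m:ℝ)+k)+7)) * ((2*(m+k+m)+2).factorial) /
      ((4:ℝ)^(m+k) * (4*((m:ℝ)+k+1)*(2*((m:ℝ)+k)+3)) * (((m+k+m)+1).factorial) *
        ((2*m+2).factorial) * ((k+1).factorial))) := by
  unfold g
  rw [show m + k + 2 - (m+1) = k + 1 from by omega,
      show m + k + (m+1) = (m+k+m)+1 from by omega,
      show 2*((m+k+m)+1) = 2*(m+k+m)+2 from by omega,
      show 2*(m+1) = 2*m+2 from by omega]
  push_cast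
  ring

set_option maxHeartbeats 3000000 in
lemma key_a (m k : ℕ) (hm : 1 ≤ m) :
    (2*((m:ℝ)+k)+3)*(4*((m:ℝ)+k)+3) * ((-1:ℝ)^m * A (m+k+2) m * m)
      - (4*((m:ℝ)+k)+5) * ((-1:ℝ)^m * A (m+k+1) m * m)
      - (2*((m:ℝ)+k)+2)*(4*((m:ℝ)+k)+7) * ((-1:ℝ)^m * A (m+k) m * m)
      = g (m+k) (m+1) - g (m+k) m := by
  rw [A_eq m k hm, A_eq1 m k hm, A_eq2 m k hm, g_eq0 m k, g_eq1 m k]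
  simp only [fact4, fact2, fact1]
  have h1 := fne (2*(m+k+m))
  have h2 := fne (m+k+m)
  have h3 := fne (2*m)
  have h4 := fne k
  have hk1 : ((m:ℝ)+k+1) ≠ 0 := by positivity
  have hk2 : (2*((m:ℝ)+k)+3) ≠ 0 := by positivity
  have hm1 : (2*(m:ℝ)+1) ≠ 0 := by positivity
  set w := 2 * (m:ℝ) - 1 with hwdef
  have hw : w ≠ 0 := mne m hm
  set q := (4:ℝ)^(m+k) with hqdef
  have hq : q ≠ 0 := four_ne (m+k)
  push_cast
  field_simp
  ring

lemma fact3 (a : ℕ) : (((a+3).factorial : ℕ) : ℝ)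
    = ((a:ℝ)+3) * ((a:ℝ)+2) * ((a:ℝ)+1) * a.factorial := by
  rw [show a+3 = (a+2)+1 from rfl, fact1, fact2]; push_cast; ring

lemma fact6 (a : ℕ) : (((a+6).factorial : ℕ) : ℝ)
    = ((a:ℝ)+6) * ((a:ℝ)+5) * ((a:ℝ)+4) * ((a:ℝ)+3) * ((a:ℝ)+2) * ((a:ℝ)+1) * a.factorial := by
  rw [show a+6 = (a+2)+4 from by omega, fact4, fact2]; push_cast; ring

lemma fact8 (a : ℕ) : (((a+8).factorial : ℕ) : ℝ)
    = ((a:ℝ)+8) * ((a:ℝ)+7) * ((a:ℝ)+6) * ((a:ℝ)+5) * ((a:ℝ)+4) * ((a:ℝ)+3) * ((a:ℝ)+2) *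
      ((a:ℝ)+1) * a.factorial := by
  rw [show a+8 = (a+4)+4 from by omega, fact4, fact4]; push_cast; ring

lemma A_zero (n m : ℕ) (h : n < m) : A n m = 0 := by
  unfold A
  rw [Nat.choose_eq_zero_of_lt (by omega : n + m < 2 * m)]
  simp

lemma A_diag (m : ℕ) (hm : 1 ≤ m) :
    A m m = ((2 * (m + m)).factorial) /
      ((4:ℝ)^m * (2 * (m : ℝ) - 1) * (m + m).factorial * (2 * m).factorial) := by
  have h := A_eq m 0 hm
  rw [Nat.add_zero] at h
  rw [h, Nat.factorial_zero]
  norm_num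

lemma g_one (n : ℕ) : g n 1 = 0 := by
  unfold g
  norm_num

set_option maxHeartbeats 1000000 in
lemma key_b (n : ℕ) :
    (2*(n:ℝ)+3)*(4*(n:ℝ)+3) * ((-1:ℝ)^(n+1) * A (n+2) (n+1) * ((n+1 : ℕ):ℝ))
      - (4*(n:ℝ)+5) * ((-1:ℝ)^(n+1) * A (n+1) (n+1) * ((n+1 : ℕ):ℝ))
      - (2*(n:ℝ)+2)*(4*(n:ℝ)+7) * ((-1:ℝ)^(n+1) * A n (n+1) * ((n+1 : ℕ):ℝ))
      = g n (n+1+1) - g n (n+1) := by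
  rw [A_zero n (n+1) (by omega), show n+2 = n+1+1 from by omega,
      A_eq (n+1) 1 (by omega), A_diag (n+1) (by omega)]
  unfold g
  rw [show 2*(n+1+1+(n+1)) = 2*(n+n)+6 from by omega,
      show n+1+1+(n+1) = (n+n)+3 from by omega,
      show 2*((n+1)+(n+1)) = 2*(n+n)+4 from by omega,
      show (n+1)+(n+1) = (n+n)+2 from by omega,
      show 2*(n+(n+1+1)) = 2*(n+n)+4 from by omega,
      show n+(n+1+1) = (n+n)+2 from by omega,
      show 2*(n+(n+1)) = 2*(n+n)+2 from by omega,
      show n+(n+1) = (n+n)+1 from by omega,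
      show 2*(n+1+1) = 2*n+4 from by omega,
      show 2*(n+1) = 2*n+2 from by omega,
      show n+2-(n+1+1) = 0 from by omega,
      show n+2-(n+1) = 1 from by omega]
  simp only [fact6, fact4, fact3, fact2, fact1, Nat.factorial_one, Nat.factorial_zero,
    pow_succ]
  have h1 := fne (2*(n+n))
  have h2 := fne (n+n)
  have h3 := fne (2*n)
  have hq := four_ne n
  have hw : 2*((n:ℝ)+1)-1 ≠ 0 := by
    have : (0:ℝ) ≤ n := n.cast_nonneg
    nlinarith
  have hn1 : ((n:ℝ)+1) ≠ 0 := by positivity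
  have hn3 : (2*(n:ℝ)+3) ≠ 0 := by positivity
  push_cast
  field_simp
  ring

set_option maxHeartbeats 1000000 in
lemma key_c (n : ℕ) :
    (2*(n:ℝ)+3)*(4*(n:ℝ)+3) * ((-1:ℝ)^(n+2) * A (n+2) (n+2) * ((n+2 : ℕ):ℝ))
      = - g n (n+2) := by
  rw [A_diag (n+2) (by omega)]
  unfold g
  rw [show 2*((n+2)+(n+2)) = (2*(n+n)+4)+4 from by omega,
      show (n+2)+(n+2) = ((n+n)+2)+2 from by omega,
      show 2*(n+(n+2)) = 2*(n+n)+4 from by omega,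
      show n+(n+2) = (n+n)+2 from by omega,
      show 2*(n+2) = 2*n+4 from by omega,
      show n+2-(n+2) = 0 from by omega]
  simp only [fact4, fact3, fact2, fact1, Nat.factorial_one, Nat.factorial_zero, pow_succ]
  have h1 := fne (2*(n+n))
  have h2 := fne (n+n)
  have h3 := fne (2*n)
  have hq := four_ne n
  have hw : 2*((n:ℝ)+2)-1 ≠ 0 := by
    have : (0:ℝ) ≤ n := n.cast_nonneg
    nlinarith
  have hn1 : ((n:ℝ)+1) ≠ 0 := by positivity
  have hn3 : (2*(n:ℝ)+3) ≠ 0 := by positivity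
  push_cast
  field_simp
  ring

noncomputable def T (N : ℕ) : ℝ := ∑ m ∈ Finset.Icc 1 N, (-1:ℝ)^m * A N m * (m:ℝ)

lemma key_all (n m : ℕ) (hm : 1 ≤ m) (hmn : m ≤ n+1) :
    (2*(n:ℝ)+3)*(4*(n:ℝ)+3) * ((-1:ℝ)^m * A (n+2) m * (m:ℝ))
      - (4*(n:ℝ)+5) * ((-1:ℝ)^m * A (n+1) m * (m:ℝ))
      - (2*(n:ℝ)+2)*(4*(n:ℝ)+7) * ((-1:ℝ)^m * A n m * (m:ℝ))
      = g n (m+1) - g n m := by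
  rcases Nat.lt_or_ge n m with h | h
  · -- m = n+1
    have hm' : m = n + 1 := by omega
    subst hm'
    exact key_b n
  · -- m ≤ n
    obtain ⟨k, rfl⟩ : ∃ k, n = m + k := ⟨n - m, by omega⟩
    have := key_a m k hm
    push_cast at this ⊢
    convert this using 2 <;> push_cast <;> ring

lemma tele (h : ℕ → ℝ) (N : ℕ) :
    ∑ m ∈ Finset.Icc 1 N, (h (m+1) - h m) = h (N+1) - h 1 := by
  induction N with
  | zero => simp
  | succ N ih => rw [Finset.sum_Icc_succ_top (by omega), ih]; ring

lemma sum_recurrence (n : ℕ) :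
    (2*(n:ℝ)+3)*(4*(n:ℝ)+3) * T (n+2) - (4*(n:ℝ)+5) * T (n+1)
      - (2*(n:ℝ)+2)*(4*(n:ℝ)+7) * T n = 0 := by
  have h1 : ∑ m ∈ Finset.Icc 1 (n+2), (-1:ℝ)^m * A (n+1) m * (m:ℝ) = T (n+1) := by
    rw [Finset.sum_Icc_succ_top (by omega : 1 ≤ n+2), A_zero (n+1) (n+2) (by omega)]
    simp [T]
  have h0 : ∑ m ∈ Finset.Icc 1 (n+2), (-1:ℝ)^m * A n m * (m:ℝ) = T n := by
    rw [Finset.sum_Icc_succ_top (by omega : 1 ≤ n+2), A_zero n (n+2) (by omega),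
      Finset.sum_Icc_succ_top (by omega : 1 ≤ n+1), A_zero n (n+1) (by omega)]
    simp [T]
  have expand : ∑ m ∈ Finset.Icc 1 (n+2),
      ((2*(n:ℝ)+3)*(4*(n:ℝ)+3) * ((-1:ℝ)^m * A (n+2) m * (m:ℝ))
        - (4*(n:ℝ)+5) * ((-1:ℝ)^m * A (n+1) m * (m:ℝ))
        - (2*(n:ℝ)+2)*(4*(n:ℝ)+7) * ((-1:ℝ)^m * A n m * (m:ℝ)))
      = (2*(n:ℝ)+3)*(4*(n:ℝ)+3) * T (n+2) - (4*(n:ℝ)+5) * T (n+1)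
        - (2*(n:ℝ)+2)*(4*(n:ℝ)+7) * T n := by
    rw [Finset.sum_sub_distrib, Finset.sum_sub_distrib, ← Finset.mul_sum, ← Finset.mul_sum,
      ← Finset.mul_sum, h1, h0]
    rfl
  rw [← expand, Finset.sum_Icc_succ_top (by omega : 1 ≤ n+2)]
  have hmid : ∑ m ∈ Finset.Icc 1 (n+1),
      ((2*(n:ℝ)+3)*(4*(n:ℝ)+3) * ((-1:ℝ)^m * A (n+2) m * (m:ℝ))
        - (4*(n:ℝ)+5) * ((-1:ℝ)^m * A (n+1) m * (m:ℝ))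
        - (2*(n:ℝ)+2)*(4*(n:ℝ)+7) * ((-1:ℝ)^m * A n m * (m:ℝ)))
      = ∑ m ∈ Finset.Icc 1 (n+1), (g n (m+1) - g n m) := by
    apply Finset.sum_congr rfl
    intro m hm
    rw [Finset.mem_Icc] at hm
    exact key_all n m hm.1 hm.2
  rw [hmid, tele, g_one, A_zero (n+1) (n+2) (by omega), A_zero n (n+2) (by omega)]
  have := key_c n
  simp only [mul_zero, zero_mul, sub_zero, mul_zero]
  rw [this]
  ring

lemma chne (n : ℕ) : (((2*n).choose n : ℕ) : ℝ) ≠ 0 := by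
  have := Nat.choose_pos (show n ≤ 2*n by omega)
  positivity

lemma ch_rel (n : ℕ) : ((n:ℝ)+1) * ((2*(n+1)).choose (n+1) : ℝ)
    = 2*(2*(n:ℝ)+1) * ((2*n).choose n : ℝ) := by
  have h : (n+1) * ((2*(n+1)).choose (n+1)) = 2 * (2*n+1) * ((2*n).choose n) :=
    Nat.succ_mul_centralBinom_succ n
  exact_mod_cast h

lemma rhs_rec (n : ℕ) :
    (2*(n:ℝ)+3)*(4*(n:ℝ)+3) * ((-1:ℝ)^(n+2) - (4:ℝ)^(n+2)/((2*(n+2)).choose (n+2) : ℝ))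
      - (4*(n:ℝ)+5) * ((-1:ℝ)^(n+1) - (4:ℝ)^(n+1)/((2*(n+1)).choose (n+1) : ℝ))
      - (2*(n:ℝ)+2)*(4*(n:ℝ)+7) * ((-1:ℝ)^n - (4:ℝ)^n/((2*n).choose n : ℝ)) = 0 := by
  have r1 := ch_rel n
  have r2 := ch_rel (n+1)
  rw [show (n+1)+1 = n+2 from rfl] at r2
  have hc0 := chne n
  have hc1 := chne (n+1)
  have hc2 := chne (n+2)
  have hn1 : ((n:ℝ)+1) ≠ 0 := by positivity
  have hn2 : ((n:ℝ)+2) ≠ 0 := by positivity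
  have e1 : (((2*(n+1)).choose (n+1) : ℕ) : ℝ) = 2*(2*(n:ℝ)+1) * ((2*n).choose n : ℝ)/((n:ℝ)+1) := by
    rw [eq_div_iff hn1]; linarith [r1]
  have e2 : (((2*(n+2)).choose (n+2) : ℕ) : ℝ)
      = 2*(2*((n:ℝ)+1)+1) * ((2*(n+1)).choose (n+1) : ℝ)/((n:ℝ)+2) := by
    rw [eq_div_iff hn2]; push_cast at r2 ⊢; linarith [r2]
  rw [e2, e1]
  have h3 : 2*(2*(n:ℝ)+1) ≠ 0 := by positivity
  field_simp
  ring

/-- For every `n ≥ 1`,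
`2 ∑_{m=1}^{n} (−1)^m A_{nm} m = (−1)^n + 1/A_{n0} = (−1)^n − 4^n / C(2n, n)`. -/
theorem A_weighted_alternating_sum (n : ℕ) (hn : 1 ≤ n) :
    2 * ∑ m ∈ Finset.Icc 1 n, (-1 : ℝ) ^ m * A n m * m
      = (-1 : ℝ) ^ n - (4 : ℝ) ^ n / (Nat.choose (2 * n) n) := by
  have main : ∀ N : ℕ, 2 * T N = (-1:ℝ)^N - (4:ℝ)^N/((2*N).choose N : ℝ) := by
    intro N
    induction N using Nat.twoStepInduction with
    | zero => simp [T]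
    | one =>
      rw [T]
      rw [show Finset.Icc 1 1 = {1} from rfl, Finset.sum_singleton]
      unfold A
      norm_num [Nat.choose]
    | more N ih ih1 =>
      have hrec := sum_recurrence N
      have hrhs := rhs_rec N
      have ha2 : (2*(N:ℝ)+3)*(4*(N:ℝ)+3) ≠ 0 := by positivity
      apply mul_left_cancel₀ ha2
      linear_combination 2*hrec - hrhs + (4*(N:ℝ)+5)*ih1
        + (2*(N:ℝ)+2)*(4*(N:ℝ)+7)*ih
  exact main n
end

section
/- For every integer n ≥ 1, λ^L_n = n · λ^K_n; that is, (1/(n−1)!) · (d^n/dx^n)[ x^{n−1} log 2ξ(x) ] at x = 1 equals n times the n-th Taylor coefficient at z = 0 of z ↦ log 2ξ(1/(1−z)). -/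
set_option maxHeartbeats 1000000

open scoped Real

/-- The doubled completed Riemann xi function `2ξ(x) = x(x−1)π^{−x/2}Γ(x/2)ζ(x)`,
made entire by removing the singularity of `ζ` at `x = 1` (so `2ξ(0) = 2ξ(1) = 1`):
since `completedRiemannZeta s = completedRiemannZeta₀ s - 1/s - 1/(1-s)` with
`completedRiemannZeta₀` entire, one has `2ξ(s) = s(s−1)·completedRiemannZeta₀ s + 1`. -/
noncomputable def xi2 (s : ℂ) : ℂ := s * (s - 1) * completedRiemannZeta₀ s + 1

/-- Keiper's coefficient `λ^K_n`: the `n`-th Taylor coefficient at `z = 0` of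
`f(z) := log 2ξ(1/(1−z))` (principal branch of `log`). -/
noncomputable def lamK (n : ℕ) : ℂ :=
  iteratedDeriv n (fun z : ℂ => Complex.log (xi2 (1 / (1 - z)))) 0 / (Nat.factorial n)

/-- Li's coefficient `λ^L_n := (1/(n−1)!) (d/dx)^n [ x^{n−1} log 2ξ(x) ]` at `x = 1`
(principal branch of `log`, well-defined and analytic near `x = 1` since `2ξ(1) = 1`). -/
noncomputable def lamL (n : ℕ) : ℂ :=
  iteratedDeriv n (fun x : ℂ => x ^ (n - 1) * Complex.log (xi2 x)) 1 /
    (Nat.factorial (n - 1))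

private lemma bridge {f : ℂ → ℂ} {p : FormalMultilinearSeries ℂ ℂ ℂ} {x : ℂ}
    (h : HasFPowerSeriesAt f p x) (n : ℕ) :
    iteratedDeriv n f x = (n.factorial : ℂ) * p.coeff n := by
  obtain ⟨r, hr⟩ := h
  have h1 := hr.factorial_smul (1 : ℂ) n
  rw [iteratedDeriv, ← h1, FormalMultilinearSeries.coeff, nsmul_eq_mul]
  norm_num

private lemma ofScalars_coeff (c : ℕ → ℂ) (m : ℕ) :
    (FormalMultilinearSeries.ofScalars ℂ c).coeff m = c m := by
  simp [FormalMultilinearSeries.coeff, FormalMultilinearSeries.ofScalars, List.prod_ofFn]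

private lemma lemA {g : ℂ → ℂ} {p : FormalMultilinearSeries ℂ ℂ ℂ}
    (hp : HasFPowerSeriesAt g p 1) (N n : ℕ) :
    iteratedDeriv n (fun x => x ^ N * g x) 1
      = (n.factorial : ℂ) * ∑ i ∈ Finset.range (n + 1), (N.choose i : ℂ) * p.coeff (n - i) := by
  set c : ℕ → ℂ := fun m => ∑ i ∈ Finset.range (m + 1), (N.choose i : ℂ) * p.coeff (m - i)
    with hc
  have hq : HasFPowerSeriesAt (fun x => x ^ N * g x) (FormalMultilinearSeries.ofScalars ℂ c) 1 := by
    rw [hasFPowerSeriesAt_iff]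
    obtain ⟨r, hrp⟩ := hp
    filter_upwards [EMetric.ball_mem_nhds (0:ℂ) hrp.r_pos] with z hz
    have hzr : (‖z‖₊ : ENNReal) < p.radius :=
      lt_of_lt_of_le (by rw [← enorm_eq_nnnorm]; simpa using hz) hrp.r_le
    have hgz : HasSum (fun k => z ^ k * p.coeff k) (g (1 + z)) := by
      have := hrp.hasSum hz
      simpa [FormalMultilinearSeries.apply_eq_pow_smul_coeff, smul_eq_mul] using this
    have hsum_norm : Summable (fun k => ‖z ^ k * p.coeff k‖) := by
      have h2 := p.summable_norm_mul_pow (r := ‖z‖₊) (by exact_mod_cast hzr)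
      apply h2.congr
      intro k
      rw [norm_mul, norm_pow, p.norm_apply_eq_norm_coef]
      push_cast
      ring
    have hb : HasSum (fun i => (N.choose i : ℂ) * z ^ i) ((1 + z) ^ N) := by
      have hz0 : ∀ i ∉ Finset.range (N + 1), (N.choose i : ℂ) * z ^ i = 0 := by
        intro i hi
        rw [Nat.choose_eq_zero_of_lt (by simpa [Nat.lt_succ_iff] using hi)]
        simp
      have h2 : HasSum (fun i => (N.choose i : ℂ) * z ^ i)
          (∑ i ∈ Finset.range (N + 1), (N.choose i : ℂ) * z ^ i) := hasSum_sum_of_ne_finset_zero hz0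
      convert h2 using 1
      rw [add_comm, add_pow]
      exact Finset.sum_congr rfl fun i _ => by ring
    have hbn : Summable (fun i => ‖(N.choose i : ℂ) * z ^ i‖) := by
      apply summable_of_ne_finset_zero (s := Finset.range (N + 1))
      intro i hi
      rw [Nat.choose_eq_zero_of_lt (by simpa [Nat.lt_succ_iff] using hi)]
      simp
    have key := hasSum_sum_range_mul_of_summable_norm' hbn hb.summable hsum_norm hgz.summable
    rw [hb.tsum_eq, hgz.tsum_eq] at key
    have hfun : ∀ m, ∑ k ∈ Finset.range (m + 1),
        ((N.choose k : ℂ) * z ^ k) * (z ^ (m - k) * p.coeff (m - k))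
        = z ^ m • (FormalMultilinearSeries.ofScalars ℂ c).coeff m := by
      intro m
      rw [ofScalars_coeff, hc, smul_eq_mul, Finset.mul_sum]
      apply Finset.sum_congr rfl
      intro k hk
      have hzk : z ^ k * z ^ (m - k) = z ^ m := by
        rw [← pow_add]
        congr 1
        simp only [Finset.mem_range, Nat.lt_succ_iff] at hk
        omega
      calc (N.choose k : ℂ) * z ^ k * (z ^ (m - k) * p.coeff (m - k))
          = (z ^ k * z ^ (m - k)) * ((N.choose k : ℂ) * p.coeff (m - k)) := by ring
        _ = z ^ m * ((N.choose k : ℂ) * p.coeff (m - k)) := by rw [hzk]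
    exact (funext hfun) ▸ key
  rw [bridge hq n, ofScalars_coeff]

private lemma lemB {g : ℂ → ℂ} {p : FormalMultilinearSeries ℂ ℂ ℂ}
    (hp : HasFPowerSeriesAt g p 1) (n : ℕ) :
    iteratedDeriv n (fun z => g (1 / (1 - z))) 0
      = (n.factorial : ℂ) * ((if n = 0 then p.coeff 0 else 0)
          + ∑ k ∈ Finset.range n, ((n - 1).choose k : ℂ) * p.coeff (k + 1)) := by
  set c : ℕ → ℂ := fun m => (if m = 0 then p.coeff 0 else 0)
      + ∑ k ∈ Finset.range m, ((m - 1).choose k : ℂ) * p.coeff (k + 1) with hc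
  have hq : HasFPowerSeriesAt (fun z => g (1 / (1 - z)))
      (FormalMultilinearSeries.ofScalars ℂ c) 0 := by
    rw [hasFPowerSeriesAt_iff]
    obtain ⟨r, hrp⟩ := hp
    obtain ⟨r1, hr1pos, hr1r⟩ := ENNReal.lt_iff_exists_nnreal_btwn.mp hrp.r_pos
    rw [ENNReal.coe_pos] at hr1pos
    have hr1pos' : (0 : ℝ) < r1 := hr1pos
    have hδpos : (0 : ℝ) < min (1/2) (r1 / 2) := by positivity
    filter_upwards [Metric.ball_mem_nhds (0 : ℂ) hδpos] with z hz
    rw [Metric.mem_ball, dist_zero_right] at hz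
    have hz2 : ‖z‖ < 1/2 := lt_of_lt_of_le hz (min_le_left _ _)
    have hzr1 : ‖z‖ < (r1 : ℝ) / 2 := lt_of_lt_of_le hz (min_le_right _ _)
    have h1znorm : (1 : ℝ)/2 ≤ ‖(1 : ℂ) - z‖ := by
      have h := norm_sub_norm_le (1 : ℂ) z
      rw [norm_one] at h
      linarith
    have h1z : (1 : ℂ) - z ≠ 0 := by
      intro h
      rw [h, norm_zero] at h1znorm
      linarith
    set w : ℂ := z * (1 - z)⁻¹ with hw
    have hinv2 : ‖((1 : ℂ) - z)⁻¹‖ ≤ 2 := by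
      rw [norm_inv]
      rw [inv_le_comm₀ (by linarith) (by norm_num)]
      linarith
    have hwnorm : ‖w‖ ≤ 2 * ‖z‖ := by
      rw [hw, norm_mul]
      calc ‖z‖ * ‖((1:ℂ) - z)⁻¹‖ ≤ ‖z‖ * 2 := by
            exact mul_le_mul_of_nonneg_left hinv2 (norm_nonneg z)
        _ = 2 * ‖z‖ := by ring
    have hwr1 : ‖w‖ < (r1 : ℝ) := by linarith
    have hwball : w ∈ Metric.eball (0 : ℂ) r := by
      rw [Metric.mem_eball, edist_zero_right]
      calc (‖w‖₊ : ENNReal) < (r1 : ENNReal) := by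
            exact_mod_cast hwr1
        _ < r := hr1r
    have hgw : HasSum (fun k => w ^ k * p.coeff k) (g (1 + w)) := by
      simpa [FormalMultilinearSeries.apply_eq_pow_smul_coeff, smul_eq_mul] using
        hrp.hasSum hwball
    have hgw1 : HasSum (fun k => w ^ (k+1) * p.coeff (k+1)) (g (1 + w) - p.coeff 0) := by
      have h2 := (hasSum_nat_add_iff' (f := fun k => w ^ k * p.coeff k) 1).mpr hgw
      simpa using h2
    set u : ℕ × ℕ → ℂ := fun kj =>
      (p.coeff (kj.1 + 1) * z ^ (kj.1 + 1)) * (((kj.2 + kj.1).choose kj.1 : ℂ) * z ^ kj.2)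
      with hu
    have hz1 : ‖z‖ < 1 := by linarith
    have hfib : ∀ k : ℕ, HasSum (fun j => u (k, j)) (w ^ (k+1) * p.coeff (k+1)) := by
      intro k
      have h3 := (hasSum_choose_mul_geometric_of_norm_lt_one k hz1).mul_left
        (p.coeff (k+1) * z ^ (k+1))
      convert h3 using 1
      · rfl
      rw [hw, mul_pow, one_div, inv_pow]
      ring
    have hfibnorm : ∀ k : ℕ, HasSum (fun j => ‖u (k, j)‖)
        ((‖p.coeff (k+1)‖ * ‖z‖^(k+1)) * (1/(1-‖z‖)^(k+1))) := by
      intro k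
      have hzn : ‖(‖z‖ : ℝ)‖ < 1 := by
        rw [Real.norm_eq_abs, abs_of_nonneg (norm_nonneg z)]; exact hz1
      have h3 := (hasSum_choose_mul_geometric_of_norm_lt_one k hzn).mul_left
        (‖p.coeff (k+1)‖ * ‖z‖^(k+1))
      apply h3.congr
      intro j
      rw [hu]
      simp only [norm_mul, norm_pow, Complex.norm_natCast]
    have honeSub : (0:ℝ) < 1 - ‖z‖ := by linarith
    have hmaj : Summable (fun k => (‖p.coeff (k+1)‖ * ‖z‖^(k+1)) * (1/(1-‖z‖)^(k+1))) := by
      have hs : Summable (fun k => ‖p (k+1)‖ * (r1 : ℝ) ^ (k+1)) := by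
        have h4 := p.summable_norm_mul_pow (r := r1) (lt_of_lt_of_le hr1r hrp.r_le)
        exact (summable_nat_add_iff 1).mpr h4
      apply Summable.of_nonneg_of_le _ _ hs
      · intro k; positivity
      · intro k
        rw [p.norm_apply_eq_norm_coef]
        have hbase : ‖z‖ * (1/(1-‖z‖)) ≤ (r1 : ℝ) := by
          have h5 : 1/(1-‖z‖) ≤ 2 := by
            rw [div_le_iff₀ honeSub]; linarith
          calc ‖z‖ * (1/(1-‖z‖)) ≤ ‖z‖ * 2 :=
                mul_le_mul_of_nonneg_left h5 (norm_nonneg z)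
            _ ≤ (r1 : ℝ) := by linarith
        calc (‖p.coeff (k+1)‖ * ‖z‖^(k+1)) * (1/(1-‖z‖)^(k+1))
            = ‖p.coeff (k+1)‖ * (‖z‖ * (1/(1-‖z‖)))^(k+1) := by
              rw [mul_pow, div_pow, one_pow]; ring
          _ ≤ ‖p.coeff (k+1)‖ * (r1 : ℝ)^(k+1) := by
              apply mul_le_mul_of_nonneg_left _ (norm_nonneg _)
              apply pow_le_pow_left₀ _ hbase
              positivity
    have husum : Summable (fun kj : ℕ × ℕ => ‖u kj‖) := by
      rw [summable_prod_of_nonneg (fun kj => norm_nonneg _)]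
      exact ⟨fun k => (hfibnorm k).summable,
        hmaj.congr fun k => ((hfibnorm k).tsum_eq).symm⟩
    have hu2 : Summable u := husum.of_norm
    have htsum : HasSum u (g (1 + w) - p.coeff 0) := by
      have h4 := hu2.hasSum
      have h5 := h4.prod_fiberwise hfib
      rwa [h5.unique hgw1] at h4
    have hsig := (Finset.HasAntidiagonal.sigmaAntidiagonalEquivProd (A := ℕ)).hasSum_iff.mpr htsum
    set d : ℕ → ℂ := fun m => if m = 0 then 0 else
        (∑ k ∈ Finset.range m, ((m - 1).choose k : ℂ) * p.coeff (k + 1)) * z ^ m with hd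
    have hrow : ∀ m : ℕ,
        HasSum (fun x : (Finset.HasAntidiagonal.antidiagonal m : Finset (ℕ × ℕ)) => u ↑x) (d (m+1)) := by
      intro m
      have h6 := (Finset.HasAntidiagonal.antidiagonal m).hasSum u
      have h7 : ∑ x ∈ Finset.HasAntidiagonal.antidiagonal m, u x = d (m+1) := by
        rw [Finset.Nat.sum_antidiagonal_eq_sum_range_succ_mk]
        simp only [hd, Nat.succ_ne_zero, if_false, Nat.add_sub_cancel]
        rw [Finset.sum_mul]
        apply Finset.sum_congr rfl
        intro i hi
        rw [Finset.mem_range, Nat.lt_succ_iff] at hi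
        simp only [hu, Nat.sub_add_cancel hi]
        have hzz : z ^ (i+1) * z ^ (m - i) = z ^ (m+1) := by
          rw [← pow_add]; congr 1; omega
        calc (p.coeff (i+1) * z ^ (i+1)) * ((m.choose i : ℂ) * z ^ (m - i))
            = (m.choose i : ℂ) * p.coeff (i+1) * (z ^ (i+1) * z ^ (m - i)) := by ring
          _ = (m.choose i : ℂ) * p.coeff (i+1) * z ^ (m+1) := by rw [hzz]
      rw [← h7]
      exact h6
    have hgrouped : HasSum (fun m => d (m+1)) (g (1 + w) - p.coeff 0) :=
      HasSum.sigma hsig hrow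
    have hd0 : HasSum d (g (1 + w) - p.coeff 0) := by
      refine (hasSum_nat_add_iff' 1).mp ?_
      simpa [hd] using hgrouped
    have he0 : HasSum (fun m => if m = 0 then p.coeff 0 else 0) (p.coeff 0) :=
      hasSum_ite_eq 0 _
    have hfinal := hd0.add he0
    rw [sub_add_cancel] at hfinal
    have hval : (1 : ℂ) + w = 1 / (1 - (0 + z)) := by
      rw [zero_add, hw]
      field_simp
      ring
    have hfun : ∀ m, z ^ m • (FormalMultilinearSeries.ofScalars ℂ c).coeff m
        = d m + (if m = 0 then p.coeff 0 else 0) := by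
      intro m
      rw [ofScalars_coeff]
      simp only [hc, hd]
      rcases Nat.eq_zero_or_pos m with h | h
      · subst h; simp
      · rw [if_neg h.ne', if_neg h.ne', smul_eq_mul]
        ring
    rw [hval] at hfinal
    exact (funext hfun) ▸ hfinal
  rw [bridge hq n, ofScalars_coeff]

/-- For every `n ≥ 1`, `λ^L_n = n · λ^K_n`. -/
theorem lamL_eq_n_mul_lamK (n : ℕ) (hn : 1 ≤ n) : lamL n = (n : ℂ) * lamK n := by
  have hd : Differentiable ℂ xi2 := by
    unfold xi2
    exact ((differentiable_id.mul (differentiable_id.sub (differentiable_const 1))).mul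
      differentiable_completedZeta₀).add (differentiable_const 1)
  have hxi : AnalyticAt ℂ xi2 1 := hd.analyticAt 1
  have hxi1 : xi2 1 = 1 := by simp [xi2]
  have hg : AnalyticAt ℂ (fun x => Complex.log (xi2 x)) 1 := by
    apply hxi.clog
    rw [hxi1]
    exact Complex.one_mem_slitPlane
  obtain ⟨p, hp⟩ := hg
  have hA := lemA hp (n - 1) n
  have hB := lemB hp n
  rw [lamL, lamK, hA, hB]
  have hS : ∑ i ∈ Finset.range (n + 1), ((n - 1).choose i : ℂ) * p.coeff (n - i)
      = ∑ k ∈ Finset.range n, ((n - 1).choose k : ℂ) * p.coeff (k + 1) := by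
    rw [Finset.sum_range_succ, Nat.choose_eq_zero_of_lt (by omega : n - 1 < n)]
    rw [← Finset.sum_range_reflect]
    simp only [Nat.cast_zero, zero_mul, add_zero]
    apply Finset.sum_congr rfl
    intro j hj
    rw [Finset.mem_range] at hj
    rw [Nat.choose_symm (by omega : j ≤ n - 1), show n - (n - 1 - j) = j + 1 from by omega]
  rw [hS, if_neg (by omega : n ≠ 0), zero_add]
  have h1 : ((n - 1).factorial : ℂ) ≠ 0 := by
    exact_mod_cast (n - 1).factorial_ne_zero
  have h2 : ((n).factorial : ℂ) ≠ 0 := by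
    exact_mod_cast n.factorial_ne_zero
  have h3 : (n.factorial : ℂ) = (n : ℂ) * ((n - 1).factorial : ℂ) := by
    exact_mod_cast (Nat.mul_factorial_pred (by omega : n ≠ 0)).symm
  rw [h3]
  have h4 : (n : ℂ) ≠ 0 := Nat.cast_ne_zero.mpr (by omega)
  field_simp
end

section
/- For every fixed real r with 0 < r < 1, (1/n) log A_{n, ⌊rn⌋} → −2r log r + (1+r) log(1+r) − (1−r) log(1−r) as n → ∞. -/
open Filter Topology

private lemma log_div_n_tendsto (f : ℕ → ℝ) (C : ℝ) (hC : 0 < C)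
    (h1 : ∀ᶠ n : ℕ in atTop, 1 ≤ f n) (h2 : ∀ᶠ n : ℕ in atTop, f n ≤ C * n) :
    Tendsto (fun n : ℕ => Real.log (f n) / n) atTop (𝓝 0) := by
  have hlog : Tendsto (fun n : ℕ => (Real.log C + Real.log n) / n) atTop (𝓝 0) := by
    have ha : Tendsto (fun n : ℕ => Real.log C / n) atTop (𝓝 0) :=
      tendsto_const_nhds.div_atTop tendsto_natCast_atTop_atTop
    have hb : Tendsto (fun n : ℕ => Real.log n / n) atTop (𝓝 0) := by
      have := Real.isLittleO_log_id_atTop.tendsto_div_nhds_zero.comp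
        (tendsto_natCast_atTop_atTop (R := ℝ))
      exact this
    simpa [add_div] using ha.add hb
  apply tendsto_of_tendsto_of_tendsto_of_le_of_le' tendsto_const_nhds hlog
  · filter_upwards [h1] with n hn
    exact div_nonneg (Real.log_nonneg hn) (Nat.cast_nonneg n)
  · filter_upwards [h1, h2, eventually_ge_atTop 1] with n hn1 hn2 hn
    have hnpos : (0 : ℝ) < n := by exact_mod_cast hn
    gcongr
    calc Real.log (f n) ≤ Real.log (C * n) :=
          Real.log_le_log (lt_of_lt_of_le one_pos hn1) hn2
      _ = Real.log C + Real.log n := Real.log_mul hC.ne' hnpos.ne'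

/-- linear-growth sequences tend to infinity -/
private lemma tendsto_atTop_of_div (d : ℕ → ℕ) (δ : ℝ) (hδ : 0 < δ)
    (h : Tendsto (fun n : ℕ => (d n : ℝ) / n) atTop (𝓝 δ)) : Tendsto d atTop atTop := by
  rw [← tendsto_natCast_atTop_iff (R := ℝ)]
  have h2 : ∀ᶠ n : ℕ in atTop, δ / 2 * n ≤ (d n : ℝ) := by
    filter_upwards [h.eventually (eventually_ge_nhds (by linarith : δ / 2 < δ)),
      eventually_ge_atTop 1] with n hn hn1
    have hnpos : (0 : ℝ) < n := by exact_mod_cast hn1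
    rw [le_div_iff₀ hnpos] at hn
    linarith
  exact tendsto_atTop_mono' _ h2
    (Tendsto.const_mul_atTop (by linarith) tendsto_natCast_atTop_atTop)

private lemma log_factorial_eq (n : ℕ) :
    Real.log (Nat.factorial n) = Real.log (Stirling.stirlingSeq n)
      + 1 / 2 * Real.log (2 * n) + n * Real.log ((n : ℝ) / Real.exp 1) := by
  have := Stirling.log_stirlingSeq_formula n
  linarith

/-- the non-leading part of Stirling is `o(n)` along linear-growth sequences -/
private lemma err_tendsto (a : ℕ → ℕ) (δ : ℝ) (hδ : 0 < δ)
    (h : Tendsto (fun n : ℕ => (a n : ℝ) / n) atTop (𝓝 δ)) :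
    Tendsto (fun n : ℕ => (Real.log (Stirling.stirlingSeq (a n))
      + 1 / 2 * Real.log (2 * a n)) / n) atTop (𝓝 0) := by
  have hinf : Tendsto a atTop atTop := tendsto_atTop_of_div a δ hδ h
  have hs : Tendsto (fun n : ℕ => Real.log (Stirling.stirlingSeq (a n)) / n) atTop (𝓝 0) := by
    have hπ : (0 : ℝ) < Real.sqrt Real.pi := Real.sqrt_pos.2 Real.pi_pos
    have : Tendsto (fun n : ℕ => Real.log (Stirling.stirlingSeq (a n))) atTop
        (𝓝 (Real.log (Real.sqrt Real.pi))) :=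
      ((Real.continuousAt_log hπ.ne').tendsto.comp Stirling.tendsto_stirlingSeq_sqrt_pi).comp hinf
    exact this.div_atTop tendsto_natCast_atTop_atTop
  have hb : Tendsto (fun n : ℕ => 1 / 2 * Real.log (2 * a n) / n) atTop (𝓝 0) := by
    have hub : ∀ᶠ n : ℕ in atTop, (2 * a n : ℝ) ≤ 2 * (δ + 1) * n := by
      filter_upwards [h.eventually (eventually_le_nhds (by linarith : δ < δ + 1)),
        eventually_ge_atTop 1] with n hn hn1
      have hnpos : (0 : ℝ) < n := by exact_mod_cast hn1
      rw [div_le_iff₀ hnpos] at hn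
      linarith
    have hlb : ∀ᶠ n : ℕ in atTop, (1 : ℝ) ≤ 2 * a n := by
      filter_upwards [hinf.eventually (eventually_ge_atTop 1)] with n hn
      have : (1 : ℝ) ≤ (a n : ℝ) := by exact_mod_cast hn
      linarith
    have := log_div_n_tendsto (fun n => 2 * (a n : ℝ)) (2 * (δ + 1)) (by linarith) hlb hub
    have h2 := this.const_mul (1 / 2 : ℝ)
    simpa [mul_div_assoc, mul_comm, mul_left_comm] using h2
  simpa [add_div] using hs.add hb

private lemma log_choose_tendsto (a b : ℕ → ℕ) (α β : ℝ) (hβ : 0 < β) (hαβ : β < α)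
    (hba : ∀ᶠ n : ℕ in atTop, b n ≤ a n)
    (hA : Tendsto (fun n : ℕ => (a n : ℝ) / n) atTop (𝓝 α))
    (hB : Tendsto (fun n : ℕ => (b n : ℝ) / n) atTop (𝓝 β)) :
    Tendsto (fun n : ℕ => Real.log ((a n).choose (b n)) / n) atTop
      (𝓝 (α * Real.log α - β * Real.log β - (α - β) * Real.log (α - β))) := by
  have hα : 0 < α := hβ.trans hαβ
  set c : ℕ → ℕ := fun n => a n - b n with hc
  have hC : Tendsto (fun n : ℕ => (c n : ℝ) / n) atTop (𝓝 (α - β)) := by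
    apply (hA.sub hB).congr'
    filter_upwards [hba] with n hn
    rw [hc]
    push_cast [Nat.cast_sub hn]
    ring
  have hainf := tendsto_atTop_of_div a α hα hA
  have hbinf := tendsto_atTop_of_div b β hβ hB
  have hcinf := tendsto_atTop_of_div c (α - β) (by linarith) hC
  have herr := ((err_tendsto a α hα hA).sub (err_tendsto b β hβ hB)).sub
    (err_tendsto c (α - β) (by linarith) hC)
  have hxlogx : ∀ (d : ℕ → ℕ) (δ : ℝ), 0 < δ →
      Tendsto (fun n : ℕ => (d n : ℝ) / n) atTop (𝓝 δ) →
      Tendsto (fun n : ℕ => (d n : ℝ) / n * Real.log ((d n : ℝ) / n)) atTop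
        (𝓝 (δ * Real.log δ)) := fun d δ hδ hd =>
    hd.mul ((Real.continuousAt_log hδ.ne').tendsto.comp hd)
  have hmain := ((hxlogx a α hα hA).sub (hxlogx b β hβ hB)).sub
    (hxlogx c (α - β) (by linarith) hC)
  have hsum : Tendsto
      (fun n : ℕ =>
        (Real.log (Stirling.stirlingSeq (a n)) + 1 / 2 * Real.log (2 * (a n : ℝ))) / n -
          (Real.log (Stirling.stirlingSeq (b n)) + 1 / 2 * Real.log (2 * (b n : ℝ))) / n -
          (Real.log (Stirling.stirlingSeq (c n)) + 1 / 2 * Real.log (2 * (c n : ℝ))) / n +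
        ((a n : ℝ) / n * Real.log ((a n : ℝ) / n) - (b n : ℝ) / n * Real.log ((b n : ℝ) / n) -
          (c n : ℝ) / n * Real.log ((c n : ℝ) / n))) atTop
      (𝓝 (α * Real.log α - β * Real.log β - (α - β) * Real.log (α - β))) := by
    simpa using herr.add hmain
  apply hsum.congr'
  filter_upwards [hba, hainf.eventually (eventually_ge_atTop 1),
    hbinf.eventually (eventually_ge_atTop 1), hcinf.eventually (eventually_ge_atTop 1),
    eventually_ge_atTop 1] with n hban han hbn hcn hn
  have hnpos : (0 : ℝ) < n := by exact_mod_cast hn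
  have hapos : (0 : ℝ) < a n := by exact_mod_cast han
  have hbpos : (0 : ℝ) < b n := by exact_mod_cast hbn
  have hcpos : (0 : ℝ) < c n := by exact_mod_cast hcn
  have habc : (a n : ℝ) = b n + c n := by
    rw [hc]; push_cast [Nat.cast_sub hban]; ring
  -- log of choose as difference of log-factorials
  have hfact : Real.log ((a n).choose (b n)) =
      Real.log (Nat.factorial (a n)) - Real.log (Nat.factorial (b n))
        - Real.log (Nat.factorial (c n)) := by
    have hkey : ((a n).choose (b n) : ℝ) * (Nat.factorial (b n)) * (Nat.factorial (c n))
        = Nat.factorial (a n) := by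
      exact_mod_cast congrArg (Nat.cast : ℕ → ℝ) (Nat.choose_mul_factorial_mul_factorial hban)
    have h1 : ((a n).choose (b n) : ℝ) ≠ 0 := by
      exact_mod_cast (Nat.choose_pos hban).ne'
    have h2 : ((Nat.factorial (b n)) : ℝ) ≠ 0 := by
      exact_mod_cast (Nat.factorial_pos (b n)).ne'
    have h3 : ((Nat.factorial (c n)) : ℝ) ≠ 0 := by
      exact_mod_cast (Nat.factorial_pos (c n)).ne'
    rw [← hkey, Real.log_mul (by positivity) h3, Real.log_mul h1 h2]
    ring
  have hrw : ∀ (d : ℕ → ℕ), (0 : ℝ) < d n →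
      (d n : ℝ) * Real.log ((d n : ℝ) / Real.exp 1)
        = (d n : ℝ) * Real.log ((d n : ℝ) / n) + (d n : ℝ) * (Real.log n - 1) := by
    intro d hd
    rw [Real.log_div hd.ne' (Real.exp_ne_zero 1), Real.log_div hd.ne' hnpos.ne',
      Real.log_exp]
    ring
  have num_eq :
      (Real.log (Stirling.stirlingSeq (a n)) + 1 / 2 * Real.log (2 * (a n : ℝ))) -
        (Real.log (Stirling.stirlingSeq (b n)) + 1 / 2 * Real.log (2 * (b n : ℝ))) -
        (Real.log (Stirling.stirlingSeq (c n)) + 1 / 2 * Real.log (2 * (c n : ℝ))) +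
        ((a n : ℝ) * Real.log ((a n : ℝ) / n) - (b n : ℝ) * Real.log ((b n : ℝ) / n) -
          (c n : ℝ) * Real.log ((c n : ℝ) / n)) =
      Real.log (Nat.factorial (a n)) - Real.log (Nat.factorial (b n))
        - Real.log (Nat.factorial (c n)) := by
    rw [log_factorial_eq, log_factorial_eq, log_factorial_eq,
      hrw a hapos, hrw b hbpos, hrw c hcpos]
    linear_combination (1 - Real.log (n : ℝ)) * habc
  rw [hfact, ← num_eq]
  field_simp

/-- For every fixed real `0 < r < 1`,
`(1/n) log A_{n, ⌊rn⌋} → −2r log r + (1+r) log(1+r) − (1−r) log(1−r)` as `n → ∞`. -/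
theorem A_exponential_rate (r : ℝ) (hr0 : 0 < r) (hr1 : r < 1) :
    Filter.Tendsto (fun n : ℕ => Real.log (A n ⌊r * (n : ℝ)⌋₊) / (n : ℝ))
      Filter.atTop
      (nhds (-2 * r * Real.log r + (1 + r) * Real.log (1 + r)
        - (1 - r) * Real.log (1 - r))) := by
  set m : ℕ → ℕ := fun n => ⌊r * (n : ℝ)⌋₊ with hm_def
  have hm : Tendsto (fun n : ℕ => (m n : ℝ) / n) atTop (𝓝 r) :=
    (tendsto_nat_floor_mul_div_atTop hr0.le).comp tendsto_natCast_atTop_atTop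
  have hminf : Tendsto m atTop atTop := tendsto_atTop_of_div m r hr0 hm
  have hmn : ∀ n : ℕ, m n ≤ n := by
    intro n
    have h1 : r * (n : ℝ) ≤ (n : ℝ) := by nlinarith [Nat.cast_nonneg (α := ℝ) n]
    have := Nat.floor_mono h1
    simpa [hm_def] using this
  -- limit of (n + m n)/n
  have hs : Tendsto (fun n : ℕ => ((n + m n : ℕ) : ℝ) / n) atTop (𝓝 (1 + r)) := by
    apply (tendsto_const_nhds.add hm).congr'
    filter_upwards [eventually_ge_atTop 1] with n hn
    have hnpos : ((n : ℝ)) ≠ 0 := by positivity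
    push_cast
    field_simp
  have hA1 : Tendsto (fun n : ℕ => ((2 * (n + m n) : ℕ) : ℝ) / n) atTop (𝓝 (2 * (1 + r))) := by
    apply (hs.const_mul 2).congr
    intro n
    push_cast
    ring
  have hB2 : Tendsto (fun n : ℕ => ((2 * m n : ℕ) : ℝ) / n) atTop (𝓝 (2 * r)) := by
    apply (hm.const_mul 2).congr
    intro n
    push_cast
    ring
  have T1 := log_choose_tendsto (fun n => 2 * (n + m n)) (fun n => n + m n)
    (2 * (1 + r)) (1 + r) (by linarith) (by linarith)
    (Eventually.of_forall fun n => by omega) hA1 hs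
  have T2 := log_choose_tendsto (fun n => n + m n) (fun n => 2 * m n)
    (1 + r) (2 * r) (by linarith) (by linarith)
    (Eventually.of_forall fun n => by have := hmn n; omega) hs hB2
  have Tc : Tendsto (fun n : ℕ => ((-(2 * n : ℤ)) : ℝ) * Real.log 2 / n) atTop
      (𝓝 (-2 * Real.log 2)) := by
    apply tendsto_const_nhds.congr'
    filter_upwards [eventually_ge_atTop 1] with n hn
    have hnpos : ((n : ℝ)) ≠ 0 := by positivity
    push_cast
    field_simp
  have Tm : Tendsto (fun n : ℕ => Real.log (2 * (m n : ℝ) - 1) / n) atTop (𝓝 0) := by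
    apply log_div_n_tendsto _ (2 * (r + 1)) (by linarith)
    · filter_upwards [hminf.eventually (eventually_ge_atTop 1)] with n hn
      have : (1 : ℝ) ≤ (m n : ℝ) := by exact_mod_cast hn
      linarith
    · filter_upwards [hm.eventually (eventually_le_nhds (by linarith : r < r + 1)),
        eventually_ge_atTop 1] with n hn hn1
      have hnpos : (0 : ℝ) < n := by exact_mod_cast hn1
      rw [div_le_iff₀ hnpos] at hn
      linarith
  have total := ((Tc.sub Tm).add T1).add T2
  have hval : -2 * Real.log 2 - 0 +
      (2 * (1 + r) * Real.log (2 * (1 + r)) - (1 + r) * Real.log (1 + r) -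
        (2 * (1 + r) - (1 + r)) * Real.log (2 * (1 + r) - (1 + r))) +
      ((1 + r) * Real.log (1 + r) - 2 * r * Real.log (2 * r) -
        (1 + r - 2 * r) * Real.log (1 + r - 2 * r)) =
      -2 * r * Real.log r + (1 + r) * Real.log (1 + r) - (1 - r) * Real.log (1 - r) := by
    have e1 : Real.log (2 * (1 + r)) = Real.log 2 + Real.log (1 + r) :=
      Real.log_mul (by norm_num) (by linarith)
    have e2 : Real.log (2 * r) = Real.log 2 + Real.log r :=
      Real.log_mul (by norm_num) hr0.ne'
    have e3 : 2 * (1 + r) - (1 + r) = 1 + r := by ring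
    have e4 : 1 + r - 2 * r = 1 - r := by ring
    rw [e3, e4, e1, e2]
    ring
  rw [hval] at total
  apply total.congr'
  filter_upwards [hminf.eventually (eventually_ge_atTop 1)] with n hn
  have hm1 : (1 : ℝ) ≤ (m n : ℝ) := by exact_mod_cast hn
  have hden : 2 * (m n : ℝ) - 1 ≠ 0 := by linarith
  have hc1 : ((Nat.choose (2 * (n + m n)) (n + m n) : ℕ) : ℝ) ≠ 0 := by
    exact_mod_cast (Nat.choose_pos (by omega)).ne'
  have hc2 : ((Nat.choose (n + m n) (2 * m n) : ℕ) : ℝ) ≠ 0 := by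
    have := hmn n
    exact_mod_cast (Nat.choose_pos (by omega)).ne'
  have hpow : (2 : ℝ) ^ (-(2 * n : ℤ)) ≠ 0 := by positivity
  have hlogA : Real.log (A n (m n)) =
      ((-(2 * n : ℤ)) : ℝ) * Real.log 2 - Real.log (2 * (m n : ℝ) - 1) +
        Real.log (Nat.choose (2 * (n + m n)) (n + m n)) +
        Real.log (Nat.choose (n + m n) (2 * m n)) := by
    rw [A, Real.log_mul (by exact mul_ne_zero (div_ne_zero hpow hden) hc1) hc2,
      Real.log_mul (div_ne_zero hpow hden) hc1, Real.log_div hpow hden,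
      Real.log_zpow]
    push_cast
    ring
  show _ = Real.log (A n (m n)) / (n : ℝ)
  rw [hlogA]
  push_cast
  ring
end
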